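/- For every m ∈ ℕ₀ and every r ∈ (0,1] one has the uniform bound |α_m(r)| ≤ e^{2∫₀¹ s|V(s)| ds}. -/

import Mathlib

open Real Set MeasureTheory Filter

/-- The kernel `L_ℓ(r,s) = (1/(2ℓ+1))(r^{ℓ+1}/s^ℓ − s^{ℓ+1}/r^ℓ)`. -/
noncomputable def besselKer (ℓ r s : ℝ) : ℝ :=
  (1 / (2 * ℓ + 1)) * (r ^ (ℓ + 1) / s ^ ℓ - s ^ (ℓ + 1) / r ^ ℓ)

/-- The iterates `ψ₀^ℓ(r) = r^{ℓ+1}`,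
`ψ_k^ℓ(r) = ∫₀^r L_ℓ(r,s) V(s) ψ_{k−1}^ℓ(s) ds`. -/
noncomputable def sppsPsi (ℓ : ℝ) (V : ℝ → ℂ) : ℕ → ℝ → ℂ
  | 0 => fun r => ((r ^ (ℓ + 1) : ℝ) : ℂ)
  | k + 1 => fun r => ∫ s in Set.Ioc (0 : ℝ) r,
      ((besselKer ℓ r s : ℝ) : ℂ) * V s * sppsPsi ℓ V k s

/-- The regular solution `w_ℓ(r) = Σ_{k=0}^∞ ψ_k^ℓ(r)`. -/
noncomputable def sppsW (ℓ : ℝ) (V : ℝ → ℂ) (r : ℝ) : ℂ :=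
  ∑' k : ℕ, sppsPsi ℓ V k r

/-- `ℓ_m = m + (d−3)/2`. -/
noncomputable def ellm (d m : ℕ) : ℝ := (m : ℝ) + ((d : ℝ) - 3) / 2

/-- `α_m(r) = y_m(r)/r^{ℓ_m+1}` where `y_m = w_{ℓ_m}`. -/
noncomputable def alphaFun (d : ℕ) (V : ℝ → ℂ) (m : ℕ) (r : ℝ) : ℂ :=
  sppsW (ellm d m) V r / ((r ^ (ellm d m + 1) : ℝ) : ℂ)

/-!
Induction on `k` gives `‖ψ_k^ℓ(r)‖ ≤ r^{ℓ+1} G(r)^k / k!` with `G(r) = ∫₀^r s|V(s)| ds`: for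
`ℓ ≥ 0` and `0 < s ≤ r` the kernel is at most `r^{ℓ+1}/s^ℓ`, which turns `s^{ℓ+1}` from the
previous iterate into `s r^{ℓ+1}`, and `∫₀^r g G^k = G^{k+1}(r)/(k+1)` since `G' = g`.
Summing over `k`, `|w_ℓ(r)| ≤ r^{ℓ+1} e^{G(r)}` and `G(r) ≤ ∫₀¹ s|V(s)| ds`.
-/

open Nat

theorem AbsolutelyContinuousOnInterval.pow {f : ℝ → ℝ} {a b : ℝ}
    (hf : AbsolutelyContinuousOnInterval f a b) (n : ℕ) :
    AbsolutelyContinuousOnInterval (fun x ↦ f x ^ n) a b := by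
  induction n with
  | zero => simpa using (LipschitzWith.const (1 : ℝ)).lipschitzOnWith.absolutelyContinuousOnInterval
  | succ n ih => simpa only [pow_succ] using ih.fun_mul hf

/-- The primitive `G` of `g` is absolutely continuous with `G' = g` a.e., so the FTC applies to
`G ^ (k + 1) / (k + 1)`. -/
theorem intervalIntegral.integral_mul_primitive_pow {g : ℝ → ℝ} {a b : ℝ}
    (hg : IntervalIntegrable g volume a b) (k : ℕ) :
    ∫ x in a..b, g x * (∫ t in a..x, g t) ^ k = (∫ t in a..b, g t) ^ (k + 1) / (k + 1) := by
  set G : ℝ → ℝ := fun x ↦ ∫ t in a..x, g t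
  have hG : AbsolutelyContinuousOnInterval G a b :=
    hg.absolutelyContinuousOnInterval_intervalIntegral left_mem_uIcc
  have hderiv : ∀ᵐ x, x ∈ uIoc a b →
      g x * G x ^ k = deriv (fun y ↦ (k + 1 : ℝ)⁻¹ * G y ^ (k + 1)) x := by
    filter_upwards [hg.ae_hasDerivAt_integral] with x hx hxab
    have hGx : HasDerivAt G (g x) x := hx (uIoc_subset_uIcc hxab) a left_mem_uIcc
    rw [((hGx.fun_pow (k + 1)).const_mul _).deriv]
    field_simp
    push_cast
    ring
  rw [intervalIntegral.integral_congr_ae hderiv,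
    ((hG.pow (k + 1)).const_mul _).integral_deriv_eq_sub]
  simp [G, div_eq_inv_mul]

theorem norm_tsum_le_mul_exp {E : Type*} [SeminormedAddCommGroup E] {f : ℕ → E} {C x : ℝ}
    (hf : ∀ k, ‖f k‖ ≤ C * (x ^ k / k !)) : ‖∑' k, f k‖ ≤ C * exp x := by
  have hmajor : Summable fun k ↦ C * (x ^ k / k !) := (summable_pow_div_factorial x).mul_left C
  have hnorm : Summable fun k ↦ ‖f k‖ := hmajor.of_nonneg_of_le (fun k ↦ norm_nonneg _) hf
  calc ‖∑' k, f k‖ ≤ ∑' k, ‖f k‖ := norm_tsum_le_tsum_norm hnorm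
    _ ≤ ∑' k, C * (x ^ k / k !) := hnorm.tsum_le_tsum hf hmajor
    _ = C * exp x := by rw [tsum_mul_left, exp_eq_exp_ℝ, NormedSpace.exp_eq_tsum_div]

theorem abs_besselKer_le {ℓ r s : ℝ} (hℓ : 0 ≤ ℓ) (hs : 0 < s) (hsr : s ≤ r) :
    |besselKer ℓ r s| ≤ r ^ (ℓ + 1) / s ^ ℓ := by
  have hr : 0 < r := hs.trans_le hsr
  have hsmall : s ^ (ℓ + 1) / r ^ ℓ ≤ r ^ (ℓ + 1) / s ^ ℓ := by gcongr
  have hsmall_nonneg : 0 ≤ s ^ (ℓ + 1) / r ^ ℓ := by positivity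
  have hcoef : 1 / (2 * ℓ + 1) ≤ 1 := by rw [div_le_one (by linarith)]; linarith
  rw [besselKer, abs_of_nonneg (by positivity [sub_nonneg.2 hsmall])]
  calc 1 / (2 * ℓ + 1) * (r ^ (ℓ + 1) / s ^ ℓ - s ^ (ℓ + 1) / r ^ ℓ)
      ≤ 1 * (r ^ (ℓ + 1) / s ^ ℓ - s ^ (ℓ + 1) / r ^ ℓ) := by gcongr
    _ ≤ r ^ (ℓ + 1) / s ^ ℓ := by linarith

theorem norm_sppsPsi_le {ℓ : ℝ} (hℓ : 0 ≤ ℓ) {V : ℝ → ℂ} (k : ℕ) {r : ℝ} (hr : 0 < r)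
    (hV : IntervalIntegrable (fun s ↦ s * ‖V s‖) volume 0 r) :
    ‖sppsPsi ℓ V k r‖ ≤ r ^ (ℓ + 1) * ((∫ s in 0..r, s * ‖V s‖) ^ k / k !) := by
  induction k generalizing r with
  | zero => simp [sppsPsi, abs_of_nonneg (rpow_nonneg hr.le _)]
  | succ k ih =>
    set g : ℝ → ℝ := fun s ↦ s * ‖V s‖
    set G : ℝ → ℝ := fun x ↦ ∫ s in 0..x, g s
    have hpointwise : ∀ s ∈ Ioc 0 r, ‖(besselKer ℓ r s : ℂ) * V s * sppsPsi ℓ V k s‖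
        ≤ r ^ (ℓ + 1) / k ! * (g s * G s ^ k) := by
      rintro s ⟨hs, hsr⟩
      have hψ := ih hs (hV.mono_set (uIcc_subset_uIcc left_mem_uIcc (mem_uIcc_of_le hs.le hsr)))
      calc ‖(besselKer ℓ r s : ℂ) * V s * sppsPsi ℓ V k s‖
          = |besselKer ℓ r s| * ‖V s‖ * ‖sppsPsi ℓ V k s‖ := by
            rw [norm_mul, norm_mul, Complex.norm_real, Real.norm_eq_abs]
        _ ≤ r ^ (ℓ + 1) / s ^ ℓ * ‖V s‖ * (s ^ (ℓ + 1) * (G s ^ k / k !)) := by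
            gcongr
            exact abs_besselKer_le hℓ hs hsr
        _ = r ^ (ℓ + 1) / k ! * (g s * G s ^ k) := by
            rw [rpow_add_one hs.ne']
            field_simp
            ring
    have hbound_int : IntervalIntegrable (fun s ↦ r ^ (ℓ + 1) / k ! * (g s * G s ^ k)) volume 0 r :=
      ((hV.mul_continuousOn ((intervalIntegral.continuousOn_primitive_interval'
        hV left_mem_uIcc).pow k))).const_mul _
    calc ‖sppsPsi ℓ V (k + 1) r‖
        = ‖∫ s in 0..r, (besselKer ℓ r s : ℂ) * V s * sppsPsi ℓ V k s‖ := by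
          rw [intervalIntegral.integral_of_le hr.le]; rfl
      _ ≤ ∫ s in 0..r, r ^ (ℓ + 1) / k ! * (g s * G s ^ k) :=
          intervalIntegral.norm_integral_le_of_norm_le hr.le
            (Eventually.of_forall hpointwise) hbound_int
      _ = r ^ (ℓ + 1) / k ! * (G r ^ (k + 1) / (k + 1)) := by
          rw [intervalIntegral.integral_const_mul, intervalIntegral.integral_mul_primitive_pow hV]
      _ = r ^ (ℓ + 1) * (G r ^ (k + 1) / (k + 1) !) := by
          rw [factorial_succ]
          push_cast
          field_simp

theorem alphaFun_bound_general (d : ℕ) (hd : 3 ≤ d) (V : ℝ → ℂ)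
    (hV : IntegrableOn (fun s : ℝ => s * ‖V s‖) (Set.Ioc 0 1)) :
    ∀ m : ℕ, ∀ r ∈ Set.Ioc (0 : ℝ) 1,
      ‖alphaFun d V m r‖ ≤ Real.exp (2 * ∫ s in Set.Ioc (0 : ℝ) 1, s * ‖V s‖) := by
  intro m r ⟨hr, hr1⟩
  have hℓ : 0 ≤ ellm d m := by
    have : (3 : ℝ) ≤ d := by exact_mod_cast hd
    unfold ellm; positivity
  have hnonneg : ∀ s ∈ Ioc (0 : ℝ) 1, 0 ≤ s * ‖V s‖ := fun s hs ↦ by have := hs.1; positivity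
  have hmono : ∫ s in 0..r, s * ‖V s‖ ≤ ∫ s in Ioc (0 : ℝ) 1, s * ‖V s‖ := by
    rw [intervalIntegral.integral_of_le hr.le]
    exact setIntegral_mono_set hV (ae_restrict_of_forall_mem measurableSet_Ioc hnonneg)
      (Ioc_subset_Ioc_right hr1).eventuallyLE
  have hI : 0 ≤ ∫ s in Ioc (0 : ℝ) 1, s * ‖V s‖ := setIntegral_nonneg measurableSet_Ioc hnonneg
  have hVr : IntervalIntegrable (fun s ↦ s * ‖V s‖) volume 0 r :=
    (intervalIntegrable_iff_integrableOn_Ioc_of_le hr.le).2 (hV.mono_set (Ioc_subset_Ioc_right hr1))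
  rw [alphaFun, norm_div, Complex.norm_real, Real.norm_eq_abs,
    abs_of_pos (rpow_pos_of_pos hr _), div_le_iff₀ (rpow_pos_of_pos hr _)]
  calc ‖sppsW (ellm d m) V r‖ ≤ r ^ (ellm d m + 1) * exp (∫ s in 0..r, s * ‖V s‖) :=
        norm_tsum_le_mul_exp fun k ↦ norm_sppsPsi_le hℓ k hr hVr
    _ ≤ exp (2 * ∫ s in Ioc (0 : ℝ) 1, s * ‖V s‖) * r ^ (ellm d m + 1) := by
      rw [mul_comm]; gcongr; linarith

/-- The uniform bound `|α_m(r)| ≤ exp(2∫₀¹ s|V(s)| ds)` for all `m ∈ ℕ₀` and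
`r ∈ (0,1]`. -/
theorem alphaFun_bound (d : ℕ) (hd : 3 ≤ d) (V : ℝ → ℂ) (hVmeas : Measurable V)
    (hV : IntegrableOn (fun s : ℝ => s * ‖V s‖) (Set.Ioc 0 1)) :
    ∀ m : ℕ, ∀ r ∈ Set.Ioc (0 : ℝ) 1,
      ‖alphaFun d V m r‖ ≤ Real.exp (2 * ∫ s in Set.Ioc (0 : ℝ) 1, s * ‖V s‖) :=
  alphaFun_bound_general d hd V hV
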